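/- Let q ∈ (0,1), J ≥ 1, and let μ₁, …, μ_J be nonzero real numbers. Define w(μ; λ) = (2/q) · Φ(−arcosh(λ · exp(μ²/2)/q) / |μ|), m = min_i {μ_i²/2}, M = max_i {μ_i²/2}, and H(λ) = Σ_{i=1}^J w(μ_i; λ). Assume H(q·exp(−m)) ≥ J, and let λ ≥ q·exp(−m) be the unique constant with H(λ) = J. Let a* be the unique solution in (1, ∞) of log(a) − m = (2a/√(a²−1) − 1)·M. If H(q·a*·exp(−m)) ≥ J, then the two-sided optimal weights w_i = w(μ_i; λ) are monotone increasing in |μ_i|: if |μ_i| ≤ |μ_j| then w_i ≤ w_j. -/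

import Mathlib

/-- The standard normal cumulative distribution function. -/
noncomputable def Phi (x : ℝ) : ℝ :=
  ∫ t in Set.Iic x, (Real.sqrt (2 * Real.pi))⁻¹ * Real.exp (-t ^ 2 / 2)

/-- The inverse hyperbolic cosine, defined on `[1, ∞)`. -/
noncomputable def arcosh (x : ℝ) : ℝ := Real.log (x + Real.sqrt (x ^ 2 - 1))

/-- The candidate optimal weight `w(μ; λ) = (2/q) Φ(−arcosh(λ exp(μ²/2)/q)/|μ|)`. -/
noncomputable def optWeight (q μ lam : ℝ) : ℝ :=
  2 / q * Phi (-arcosh (lam * Real.exp (μ ^ 2 / 2) / q) / |μ|)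


/-! Each weight is strictly decreasing in `λ`, so `H(q a* e^{-m}) ≥ J = H(λ)` forces
`λ ≥ q a* e^{-m}`. Since `Φ` is increasing, `wᵢ` is increasing in `|μᵢ|` as soon as
`g(x) = arcosh(u(x))/x`, `u(x) = λ e^{x²/2}/q`, decreases on `m ≤ x²/2 ≤ M`.
The sign of `g'(x)` is that of `x² u/√(u²-1) - arcosh u`. On that range `u ≥ a*`,
so `u/√(u²-1) ≤ ρ = a*/√(a*²-1)`, and `arcosh u ≥ log u ≥ log a* - m + x²/2`, which by the
choice of `a*` is `(2ρ - 1)M + x²/2 ≥ 2ρ · x²/2` (as `ρ > 1` and `x²/2 ≤ M`). -/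

open Real hiding arcosh
open Set MeasureTheory ProbabilityTheory

lemma arcosh_eq_real_arcosh : arcosh = Real.arcosh := rfl

lemma Phi_eq_integral_gaussianPDFReal (x : ℝ) : Phi x = ∫ t in Iic x, gaussianPDFReal 0 1 t := by
  simp [Phi, gaussianPDFReal]

lemma strictMono_integral_Iic_of_pos {f : ℝ → ℝ} (hf : Integrable f) (hpos : ∀ t, 0 < f t) :
    StrictMono fun x => ∫ t in Iic x, f t := by
  intro x y hxy
  rw [← sub_pos, intervalIntegral.integral_Iic_sub_Iic hf.integrableOn hf.integrableOn]
  exact intervalIntegral.intervalIntegral_pos_of_pos_on hf.intervalIntegrable (fun t _ => hpos t) hxy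

lemma Phi_strictMono : StrictMono Phi := by
  rw [show Phi = _ from funext Phi_eq_integral_gaussianPDFReal]
  exact strictMono_integral_Iic_of_pos
    (integrable_gaussianPDFReal 0 1) fun t => gaussianPDFReal_pos 0 1 t one_ne_zero

lemma optWeight_strictAntiOn {q μ : ℝ} (hq : 0 < q) (hμ : μ ≠ 0) :
    StrictAntiOn (optWeight q μ) (Ioi 0) := by
  intro l₁ (hl₁ : 0 < l₁) l₂ (hl₂ : 0 < l₂) hl
  unfold optWeight
  gcongr ?_ * ?_
  apply Phi_strictMono
  have hμ : 0 < |μ| := abs_pos.2 hμ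
  gcongr
  rw [arcosh_eq_real_arcosh, Real.arcosh_lt_arcosh (by positivity) (by positivity)]
  gcongr

lemma StrictAntiOn.sum {ι : Type*} [Fintype ι] [Nonempty ι] {f : ι → ℝ → ℝ} {s : Set ℝ}
    (hf : ∀ i, StrictAntiOn (f i) s) : StrictAntiOn (fun x => ∑ i, f i x) s :=
  fun _ ha _ hb hab => Finset.sum_lt_sum_of_nonempty Finset.univ_nonempty
    fun i _ => hf i ha hb hab

lemma div_sqrt_sq_sub_one_le {a u : ℝ} (ha : 1 < a) (hau : a ≤ u) :
    u / √(u ^ 2 - 1) ≤ a / √(a ^ 2 - 1) := by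
  have hu : 1 < u := ha.trans_le hau
  have hu2 : 0 < u ^ 2 - 1 := by nlinarith
  have ha2 : 0 < a ^ 2 - 1 := by nlinarith
  rw [div_le_div_iff₀ (sqrt_pos.2 hu2) (sqrt_pos.2 ha2),
    ← pow_le_pow_iff_left₀ (by positivity) (by positivity) two_ne_zero, mul_pow, mul_pow,
    sq_sqrt ha2.le, sq_sqrt hu2.le]
  nlinarith

lemma log_le_arcosh {x : ℝ} (hx : 0 < x) : log x ≤ arcosh x :=
  log_le_log hx (le_add_of_nonneg_right (sqrt_nonneg _))

lemma two_mul_mul_div_sqrt_le_arcosh {a u t M : ℝ} (ha : 1 < a) (hau : a ≤ u) (ht : 0 ≤ t)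
    (htM : t ≤ M) (hlog : (2 * a / √(a ^ 2 - 1) - 1) * M + t ≤ log u) :
    2 * t * (u / √(u ^ 2 - 1)) ≤ arcosh u := by
  set ρ := a / √(a ^ 2 - 1)
  have hρ : 1 ≤ ρ := by
    rw [one_le_div (sqrt_pos.2 (by nlinarith)), sqrt_le_iff]
    constructor <;> nlinarith
  calc 2 * t * (u / √(u ^ 2 - 1)) ≤ 2 * t * ρ := by gcongr; exact div_sqrt_sq_sub_one_le ha hau
    _ ≤ (2 * ρ - 1) * M + t := by nlinarith
    _ ≤ log u := by rwa [mul_div_assoc] at hlog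
    _ ≤ arcosh u := log_le_arcosh (by linarith)

lemma hasDerivAt_arcosh_mul_exp_div {c x : ℝ} (hx : x ≠ 0) (hu : 1 < c * exp (x ^ 2 / 2)) :
    HasDerivAt (fun y => arcosh (c * exp (y ^ 2 / 2)) / y)
      ((x ^ 2 * (c * exp (x ^ 2 / 2) / √((c * exp (x ^ 2 / 2)) ^ 2 - 1))
        - arcosh (c * exp (x ^ 2 / 2))) / x ^ 2) x := by
  have hexp : HasDerivAt (fun y => c * exp (y ^ 2 / 2)) (c * exp (x ^ 2 / 2) * x) x := by
    refine (((hasDerivAt_pow 2 x).div_const 2).exp.const_mul c).congr_deriv ?_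
    push_cast
    ring
  rw [arcosh_eq_real_arcosh]
  refine (((Real.hasDerivAt_arcosh hu).comp x hexp).div (hasDerivAt_id x) hx).congr_deriv ?_
  simp only [Function.comp_apply, id]
  ring

lemma antitoneOn_arcosh_mul_exp_div {a c m M x₀ x₁ : ℝ} (ha : 1 < a)
    (haM : (2 * a / √(a ^ 2 - 1) - 1) * M ≤ log a - m) (hc : a * exp (-m) ≤ c)
    (hx₀ : 0 < x₀) (hm : m ≤ x₀ ^ 2 / 2) (hM : x₁ ^ 2 / 2 ≤ M) :
    AntitoneOn (fun x => arcosh (c * exp (x ^ 2 / 2)) / x) (Icc x₀ x₁) := by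
  have hc₀ : 0 < c := lt_of_lt_of_le (by positivity) hc
  have hlog_c : log a - m ≤ log c := by
    have := log_le_log (by positivity) hc
    rwa [log_mul (by positivity) (exp_ne_zero _), log_exp, ← sub_eq_add_neg] at this
  have bounds : ∀ x ∈ Icc x₀ x₁, 0 < x ∧ a ≤ c * exp (x ^ 2 / 2) ∧
      (2 * a / √(a ^ 2 - 1) - 1) * M + x ^ 2 / 2 ≤ log (c * exp (x ^ 2 / 2)) ∧ x ^ 2 / 2 ≤ M := by
    rintro x ⟨hx₀x, hxx₁⟩
    have hx : 0 < x := hx₀.trans_le hx₀x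
    have hmx : m ≤ x ^ 2 / 2 := by nlinarith
    have hlog : log a - m + x ^ 2 / 2 ≤ log (c * exp (x ^ 2 / 2)) := by
      rw [log_mul hc₀.ne' (exp_ne_zero _), log_exp]
      linarith
    refine ⟨hx, ?_, by linarith, by nlinarith⟩
    rw [← log_le_log_iff (by linarith) (by positivity)]
    linarith
  have hderiv (x) (hx : x ∈ Icc x₀ x₁) := hasDerivAt_arcosh_mul_exp_div (bounds x hx).1.ne'
    (ha.trans_le (bounds x hx).2.1)
  apply antitoneOn_of_deriv_nonpos (convex_Icc x₀ x₁)
  · exact fun x hx => (hderiv x hx).continuousAt.continuousWithinAt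
  · rw [interior_Icc]
    exact fun x hx => (hderiv x (Ioo_subset_Icc_self hx)).differentiableAt.differentiableWithinAt
  · rw [interior_Icc]
    intro x hx
    obtain ⟨hx₀, hau, hlog, hxM⟩ := bounds x (Ioo_subset_Icc_self hx)
    have := two_mul_mul_div_sqrt_le_arcosh ha hau (by positivity) hxM hlog
    rw [(hderiv x (Ioo_subset_Icc_self hx)).deriv]
    exact div_nonpos_of_nonpos_of_nonneg (by linarith) (sq_nonneg x)

lemma optWeight_eq (q μ lam : ℝ) :
    optWeight q μ lam = 2 / q * Phi (-(arcosh (lam / q * exp (|μ| ^ 2 / 2)) / |μ|)) := by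
  rw [optWeight, sq_abs, neg_div, div_mul_eq_mul_div lam q]

theorem stmt_13_general (q : ℝ) (hq : q ∈ Set.Ioo (0 : ℝ) 1) (J : ℕ)
    (μ : Fin J → ℝ) (hμ : ∀ i, μ i ≠ 0)
    (m : ℝ) (hm_le : ∀ i, m ≤ (μ i) ^ 2 / 2)
    (M : ℝ) (hM_le : ∀ i, (μ i) ^ 2 / 2 ≤ M)
    (lam : ℝ) (hlam_ge : q * Real.exp (-m) ≤ lam)
    (hlam : ∑ i, optWeight q (μ i) lam = J)
    (astar : ℝ) (hastar_gt : 1 < astar)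
    (hastar : Real.log astar - m = (2 * astar / Real.sqrt (astar ^ 2 - 1) - 1) * M)
    (hH' : (J : ℝ) ≤ ∑ i, optWeight q (μ i) (q * astar * Real.exp (-m))) :
    ∀ i j, |μ i| ≤ |μ j| → optWeight q (μ i) lam ≤ optWeight q (μ j) lam := by
  intro i j hij
  have : Nonempty (Fin J) := ⟨i⟩
  have hq₀ : 0 < q := hq.1
  have hH : StrictAntiOn (fun l => ∑ k, optWeight q (μ k) l) (Ioi 0) :=
    StrictAntiOn.sum fun k => optWeight_strictAntiOn hq₀ (hμ k)
  have hlam_ge' : q * astar * exp (-m) ≤ lam :=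
    (hH.le_iff_ge ((by positivity : 0 < q * exp (-m)).trans_le hlam_ge)
      (mem_Ioi.2 (by positivity))).1 (hlam ▸ hH')
  have hanti := antitoneOn_arcosh_mul_exp_div (c := lam / q) hastar_gt hastar.ge
    (by rwa [le_div_iff₀ hq₀, mul_comm, ← mul_assoc]) (abs_pos.2 (hμ i))
    (by rw [sq_abs]; exact hm_le i) (by rw [sq_abs]; exact hM_le j)
  rw [optWeight_eq, optWeight_eq]
  gcongr ?_ * ?_
  exact Phi_strictMono.monotone (neg_le_neg (hanti ⟨le_rfl, hij⟩ ⟨hij, le_rfl⟩ hij))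

/-- Monotonicity conditions for two-sided Spjøtvoll weights: with `m = min μᵢ²/2`,
`M = max μᵢ²/2`, `H(λ) = Σᵢ w(μᵢ; λ)`, `λ ≥ q e^{−m}` the unique constant with
`H(λ) = J`, and `a*` the unique solution in `(1,∞)` of
`log a − m = (2a/√(a²−1) − 1) M`: if `H(q a* e^{−m}) ≥ J`, then the two-sided optimal
weights `wᵢ = w(μᵢ; λ)` are monotone increasing in `|μᵢ|`. -/
theorem stmt_13 (q : ℝ) (hq : q ∈ Set.Ioo (0 : ℝ) 1) (J : ℕ) (hJ : 1 ≤ J)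
    (μ : Fin J → ℝ) (hμ : ∀ i, μ i ≠ 0)
    (m : ℝ) (hm_le : ∀ i, m ≤ (μ i) ^ 2 / 2) (hm_eq : ∃ i, m = (μ i) ^ 2 / 2)
    (M : ℝ) (hM_le : ∀ i, (μ i) ^ 2 / 2 ≤ M) (hM_eq : ∃ i, M = (μ i) ^ 2 / 2)
    (hH : (J : ℝ) ≤ ∑ i, optWeight q (μ i) (q * Real.exp (-m)))
    (lam : ℝ) (hlam_ge : q * Real.exp (-m) ≤ lam)
    (hlam : ∑ i, optWeight q (μ i) lam = J)
    (astar : ℝ) (hastar_gt : 1 < astar)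
    (hastar : Real.log astar - m = (2 * astar / Real.sqrt (astar ^ 2 - 1) - 1) * M)
    (hH' : (J : ℝ) ≤ ∑ i, optWeight q (μ i) (q * astar * Real.exp (-m))) :
    ∀ i j, |μ i| ≤ |μ j| → optWeight q (μ i) lam ≤ optWeight q (μ j) lam :=
  stmt_13_general q hq J μ hμ m hm_le M hM_le lam hlam_ge hlam astar hastar_gt hastar hH'
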